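/- Let (M,D) be a Dirac manifold on which a Lie group G acts by Dirac actions (i.e., (Φ_g* X, Φ_g* α) ∈ Γ(D) whenever (X,α) ∈ Γ(D)). Suppose (X,α) and (Y,β) are sections of D with α and β annihilating all infinitesimal generators ξ_M, ξ ∈ 𝔤. Then the 1-form L_X β − i_Y dα also annihilates all infinitesimal generators ξ_M. -/

import Mathlib

/- We work on the local model of a smooth manifold: an arbitrary real normed
space `E`.  Vector fields are maps `E → E`, one-forms are maps
`E → (E →L[ℝ] ℝ)`. -/

variable {E : Type*} [NormedAddCommGroup E] [NormedSpace ℝ E]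

/-- The Lie bracket `[X,Y]` of vector fields. -/
noncomputable def lieB (X Y : E → E) : E → E :=
  fun x => fderiv ℝ Y x (X x) - fderiv ℝ X x (Y x)

/-- The Lie derivative `L_X β` of a one-form `β` along a vector field `X`:
`(L_X β)_x v = (Dβ_x (X x)) v + β_x (DX_x v)`. -/
noncomputable def lieDerOneForm (X : E → E) (β : E → (E →L[ℝ] ℝ)) :
    E → (E →L[ℝ] ℝ) :=
  fun x => fderiv ℝ β x (X x) + (β x).comp (fderiv ℝ X x)

/-- The interior product `i_Y dα` of the exterior differential of a one-form
`α` with a vector field `Y`:  `(i_Y dα)_x v = (Dα_x (Y x)) v − (Dα_x v) (Y x)`. -/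
noncomputable def intDiff (Y : E → E) (α : E → (E →L[ℝ] ℝ)) :
    E → (E →L[ℝ] ℝ) :=
  fun x => fderiv ℝ α x (Y x) - (fderiv ℝ α x).flip (Y x)

/-- The canonical symmetric pairing on `E ⊕ E*` (with `E* = E →L[ℝ] ℝ`):
`⟨(u,α),(v,β)⟩ = β(u) + α(v)`. -/
noncomputable def pairingFormC (E : Type*) [NormedAddCommGroup E]
    [NormedSpace ℝ E] : LinearMap.BilinForm ℝ (E × (E →L[ℝ] ℝ)) :=
  LinearMap.mk₂ ℝ (fun p q => q.2 p.1 + p.2 q.1)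
    (fun p p' q => by
      simp only [Prod.fst_add, Prod.snd_add, map_add,
        ContinuousLinearMap.add_apply]; ring)
    (fun c p q => by
      simp only [Prod.smul_fst, Prod.smul_snd, map_smul,
        ContinuousLinearMap.coe_smul', Pi.smul_apply, smul_eq_mul]; ring)
    (fun p q q' => by
      simp only [Prod.fst_add, Prod.snd_add, map_add,
        ContinuousLinearMap.add_apply]; ring)
    (fun p c q => by
      simp only [Prod.smul_fst, Prod.smul_snd, map_smul,
        ContinuousLinearMap.coe_smul', Pi.smul_apply, smul_eq_mul]; ring)

private lemma ann_deriv {E : Type*} [NormedAddCommGroup E] [NormedSpace ℝ E]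
    {γ : E → (E →L[ℝ] ℝ)} {ζ : E → E}
    (hγ : ContDiff ℝ (⊤ : ℕ∞) γ) (hζ : ContDiff ℝ (⊤ : ℕ∞) ζ)
    (h0 : ∀ x, γ x (ζ x) = 0) (x v : E) :
    fderiv ℝ γ x v (ζ x) + γ x (fderiv ℝ ζ x v) = 0 := by
  have hγd : DifferentiableAt ℝ γ x := (hγ.differentiable (by simp)).differentiableAt
  have hζd : DifferentiableAt ℝ ζ x := (hζ.differentiable (by simp)).differentiableAt
  have h := fderiv_clm_apply hγd hζd
  have hz : (fun y => γ y (ζ y)) = fun _ => (0:ℝ) := funext h0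
  rw [hz, fderiv_const_apply] at h
  have := congrFun (congrArg (fun (L : E →L[ℝ] ℝ) => (L : E → ℝ)) h.symm) v
  simpa [add_comm] using this

/-- let `D` be a Dirac structure (a field of Lagrangian
subspaces of `E ⊕ E*`) invariant under the infinitesimal generators `ξ ∈ S`
of a symmetry group (i.e. `(L_ξ X, L_ξ α)` is a section of `D` whenever
`(X,α)` is).  If `(X,α)` and `(Y,β)` are smooth sections of `D` whose
one-form parts annihilate all generators `ξ ∈ S`, then the one-form
`L_X β − i_Y dα` also annihilates all generators. -/
theorem dirac_invariance_lemma
    (D : E → Submodule ℝ (E × (E →L[ℝ] ℝ)))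
    (hLag : ∀ x, D x = (pairingFormC E).orthogonal (D x))
    (S : Set (E → E)) (hS : ∀ ξ ∈ S, ContDiff ℝ (⊤ : ℕ∞) ξ)
    (hInv : ∀ (Z : E → E) (γ : E → (E →L[ℝ] ℝ)),
      ContDiff ℝ (⊤ : ℕ∞) Z → ContDiff ℝ (⊤ : ℕ∞) γ → (∀ x, (Z x, γ x) ∈ D x) →
      ∀ ξ ∈ S, ∀ x, (lieB ξ Z x, lieDerOneForm ξ γ x) ∈ D x)
    (X Y : E → E) (α β : E → (E →L[ℝ] ℝ))
    (hX : ContDiff ℝ (⊤ : ℕ∞) X) (hY : ContDiff ℝ (⊤ : ℕ∞) Y)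
    (hα : ContDiff ℝ (⊤ : ℕ∞) α) (hβ : ContDiff ℝ (⊤ : ℕ∞) β)
    (hXα : ∀ x, (X x, α x) ∈ D x) (hYβ : ∀ x, (Y x, β x) ∈ D x)
    (hαS : ∀ ξ ∈ S, ∀ x, α x (ξ x) = 0)
    (hβS : ∀ ξ ∈ S, ∀ x, β x (ξ x) = 0) :
    ∀ ξ ∈ S, ∀ x, (lieDerOneForm X β x - intDiff Y α x) (ξ x) = 0 := by
  intro ξ hξ x
  have hξc := hS ξ hξ
  have hInvX := hInv X α hX hα hXα ξ hξ x
  -- pairing of (lieB ξ X, L_ξ α) with (Y, β) vanishes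
  have hmem : (lieB ξ X x, lieDerOneForm ξ α x) ∈ (pairingFormC E).orthogonal (D x) := by
    rw [← hLag x]; exact hInvX
  have horth := (LinearMap.BilinForm.mem_orthogonal_iff.mp hmem) (Y x, β x) (hYβ x)
  have hpair : β x (lieB ξ X x) + lieDerOneForm ξ α x (Y x) = 0 := by
    simpa [pairingFormC, LinearMap.BilinForm.IsOrtho, add_comm] using horth
  have hB := ann_deriv hβ hξc (hβS ξ hξ) x (X x)
  have hC := ann_deriv hα hξc (hαS ξ hξ) x (Y x)
  simp only [lieDerOneForm, lieB, intDiff, ContinuousLinearMap.sub_apply,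
    ContinuousLinearMap.add_apply, ContinuousLinearMap.coe_comp', Function.comp_apply,
    ContinuousLinearMap.flip_apply, map_sub] at hpair hB hC ⊢
  linarith
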